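/- Let 𝓒 be an algebra of real-valued functions on H that is closed under composition with every function b ∈ 𝓑. Then the following alternative holds: either 𝓒 is not contained in the set 𝓞 of hidden observables, or the family of operators σ(𝓒) = {σ(f) : f ∈ 𝓒} is commutative, i.e. σ(f)·σ(g) = σ(g)·σ(f) for all f, g ∈ 𝓒. -/

import Mathlib

open MeasureTheory

noncomputable section

namespace HiddenVar

variable {H : Type*} [NormedAddCommGroup H] [InnerProductSpace ℂ H] [CompleteSpace H]

/-- `η` is an admissible hidden-state measure on `ℂ`: a Borel probability measure without
atoms which is invariant under every rotation `z ↦ e^{iθ}·z`. -/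
def IsEta (η : Measure ℂ) : Prop :=
  IsProbabilityMeasure η ∧ NoAtoms η ∧
    ∀ θ : ℝ, Measure.map (fun z : ℂ => Complex.exp (θ * Complex.I) * z) η = η

/-- A subset `A ⊆ H` is pseudo-Borel if its intersection with every complex line is Borel;
equivalently, its preimage under `z ↦ z • ψ` is Borel in `ℂ` for every unit vector `ψ`. -/
def PseudoBorel (A : Set H) : Prop :=
  ∀ ψ : H, ‖ψ‖ = 1 → MeasurableSet ((fun z : ℂ => z • ψ) ⁻¹' A)

/-- A function `f : H → ℝ` is pseudo-Borel if `f ⁻¹' B` is pseudo-Borel for every Borel `B`. -/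
def PseudoBorelFun (f : H → ℝ) : Prop :=
  ∀ B : Set ℝ, MeasurableSet B → PseudoBorel (f ⁻¹' B)

/-- The pseudo-Borel σ-algebra on `H`. -/
def pseudoBorelSigma (H : Type*) [NormedAddCommGroup H] [InnerProductSpace ℂ H] :
    MeasurableSpace H where
  MeasurableSet' := PseudoBorel
  measurableSet_empty := fun ψ _ => by simp
  measurableSet_compl := fun A hA ψ hψ => by
    rw [Set.preimage_compl]; exact (hA ψ hψ).compl
  measurableSet_iUnion := fun s hs ψ hψ => by
    rw [Set.preimage_iUnion]; exact MeasurableSet.iUnion fun i => hs i ψ hψ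

/-- The mass that the canonical measure on the complex line through the unit vector `ψ`
gives to (the trace on that line of) the set `A`. -/
def lineMass (η : Measure ℂ) (ψ : H) (A : Set H) : ENNReal :=
  η ((fun z : ℂ => z • ψ) ⁻¹' A)

/-- A measure-zero pseudo-Borel subset of `H` : it meets every complex line in a null set. -/
def NullPB (η : Measure ℂ) (A : Set H) : Prop :=
  PseudoBorel A ∧ ∀ ψ : H, ‖ψ‖ = 1 → lineMass η ψ A = 0

/-- `f` is essentially bounded: bounded outside a measure-zero pseudo-Borel set. -/
def EssBddPB (η : Measure ℂ) (f : H → ℝ) : Prop :=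
  ∃ N : Set H, NullPB η N ∧ ∃ C : ℝ, ∀ x ∉ N, |f x| ≤ C

/-- The expectation value `⟨T⟩_ψ = ⟨Tψ, ψ⟩` of a (self-adjoint) operator at `ψ`. -/
def expVal (T : H →L[ℂ] H) (ψ : H) : ℝ :=
  (@inner ℂ _ _ ψ (T ψ)).re

/-- The integral `∫_{ℂ·ψ} f dη_{ℂ·ψ}` of `f` over the complex line through the unit
vector `ψ`, with respect to the canonical copy of `η` on that line. -/
def lineIntegral (η : Measure ℂ) (f : H → ℝ) (ψ : H) : ℝ :=
  ∫ z : ℂ, f (z • ψ) ∂η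

/-- `f` is an essentially bounded pseudo-Borel function with orthodox mean values, with
(necessarily unique) associated bounded self-adjoint operator `T = σ(f)`. -/
def OrthodoxMean (η : Measure ℂ) (f : H → ℝ) (T : H →L[ℂ] H) : Prop :=
  PseudoBorelFun f ∧ EssBddPB η f ∧ IsSelfAdjoint T ∧
    ∀ ψ : H, ‖ψ‖ = 1 → lineIntegral η f ψ = expVal T ψ

/-- `b ∈ 𝓑` : Borel functions `ℝ → ℝ` mapping bounded sets to bounded sets. -/
def MemB (b : ℝ → ℝ) : Prop :=
  Measurable b ∧ ∀ s : Set ℝ, Bornology.IsBounded s → Bornology.IsBounded (b '' s)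

/-- `ν` is the spectral (scalar) measure of the bounded self-adjoint operator `T` at the
unit vector `ψ`: the unique probability measure supported in `[-‖T‖, ‖T‖]` whose moments
are the expectation values `⟨Tⁿ⟩_ψ`. -/
def IsSpecMeasure (T : H →L[ℂ] H) (ψ : H) (ν : Measure ℝ) : Prop :=
  IsProbabilityMeasure ν ∧ ν (Set.Icc (-‖T‖) ‖T‖)ᶜ = 0 ∧
    ∀ n : ℕ, ∫ r, r ^ n ∂ν = expVal (T ^ n) ψ

/-- `S = b(T)` : the Borel functional calculus of the bounded self-adjoint operator `T` at
the Borel function `b`, characterized by `⟨b(T)⟩_ψ = ∫ b dν_ψ` against the spectral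
measures `ν_ψ` of `T`. -/
def IsBFC (b : ℝ → ℝ) (T S : H →L[ℂ] H) : Prop :=
  IsSelfAdjoint S ∧ ∀ ψ : H, ‖ψ‖ = 1 → ∀ ν : Measure ℝ, IsSpecMeasure T ψ ν →
    ∫ r, b r ∂ν = expVal S ψ

/-- `f` is a hidden observable with `σ(f) = T`: `f` has orthodox mean values with operator
`T` and for every `b ∈ 𝓑` the composition `b ∘ f` has orthodox mean values with operator
`b(σ(f))`. -/
def HiddenObs (η : Measure ℂ) (f : H → ℝ) (T : H →L[ℂ] H) : Prop :=
  OrthodoxMean η f T ∧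
    ∀ b : ℝ → ℝ, MemB b → ∃ S : H →L[ℂ] H, IsBFC b T S ∧ OrthodoxMean η (b ∘ f) S

/-- `f` is a hidden observable (member of `𝓞`). -/
def IsHiddenObs (η : Measure ℂ) (f : H → ℝ) : Prop :=
  ∃ T : H →L[ℂ] H, HiddenObs η f T

/-- The characteristic function `χ_L` of a subset of `H`. -/
def chi (L : Set H) : H → ℝ :=
  Set.indicator L fun _ => (1 : ℝ)

/-- `L` is a hidden proposition with `σ(χ_L) = E`. -/
def HiddenProp (η : Measure ℂ) (L : Set H) (E : H →L[ℂ] H) : Prop :=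
  HiddenObs η (chi L) E

/-- `L` is a hidden proposition. -/
def IsHiddenProp (η : Measure ℂ) (L : Set H) : Prop :=
  ∃ E : H →L[ℂ] H, HiddenProp η L E

/-- `E` is an orthogonal projection of `H`. -/
def IsProjection (E : H →L[ℂ] H) : Prop :=
  IsSelfAdjoint E ∧ E * E = E

/-- The orthogonal projection onto the complex line `ℂ·ψ` spanned by a unit vector. -/
def projLine (ψ : H) : H →L[ℂ] H :=
  (innerSL ℂ ψ).smulRight ψ

/-- `HasTrace S t` : the operator `S` is trace class with trace `t`; the series
`Σ ⟪e_k, S e_k⟫` converges to `t` for every Hilbert basis. -/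
def HasTrace (S : H →L[ℂ] H) (t : ℂ) : Prop :=
  ∀ b : HilbertBasis ℕ ℂ H, HasSum (fun k => (@inner ℂ _ _ (b k) (S (b k)))) t

/-- `D` is a density matrix: a positive trace-class operator of trace one, i.e.
`D = Σ w_k·P_{ψ_k}` for some Hilbert basis `{ψ_k}` and weights `w_k ≥ 0` with `Σ w_k = 1`. -/
def IsDensityMatrix (D : H →L[ℂ] H) : Prop :=
  ∃ (b : HilbertBasis ℕ ℂ H) (w : ℕ → ℝ), (∀ k, 0 ≤ w k) ∧ HasSum w 1 ∧
    HasSum (fun k => (w k : ℂ) • projLine (b k)) D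

/-- A hidden mixed state: a probability measure on the pseudo-Borel σ-algebra of `H`
giving the same mass to hidden propositions having the same trace-measure on every
complex line. -/
def HiddenMixed (η : Measure ℂ) (μ : @Measure H (pseudoBorelSigma H)) : Prop :=
  IsProbabilityMeasure μ ∧
    ∀ L M : Set H, IsHiddenProp η L → IsHiddenProp η M →
      (∀ ψ : H, ‖ψ‖ = 1 → lineMass η ψ L = lineMass η ψ M) → μ L = μ M

/-- `D = δ(μ)` : `D` is the density matrix associated to the hidden mixed state `μ`,
characterized by `μ(L) = Trace[σ(χ_L)·D]` for every hidden proposition `L`. -/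
def IsDelta (η : Measure ℂ) (μ : @Measure H (pseudoBorelSigma H)) (D : H →L[ℂ] H) : Prop :=
  IsDensityMatrix D ∧
    ∀ (L : Set H) (E : H →L[ℂ] H), HiddenProp η L E →
      HasTrace (E ∘L D) (((μ L).toReal : ℂ))

end HiddenVar

/-!
Suppose every element of `𝓒` is a hidden observable. Integration over a complex line is linear, so
`σ` is additive on `𝓒`, and the axiom `σ(b ∘ f) = b(σ f)` for `b(r) = r²` gives `σ(u²) = σ(u)²`.
Polarising, `σ(u v)` is the Jordan product `(A B + B A) / 2` of `A = σ u` and `B = σ v`.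
Evaluating `σ(u · u v) = σ(u² · v)` with this formula in two ways yields `[A, [A, B]] = 0`, and
for self-adjoint `A` and `B` the Kleinecke–Shirokov argument turns this into `[A, B] = 0`.
-/

section Commutator

variable {R : Type*}

open scoped Nat

lemma lie_lie_eq_zero_of_jordan [Ring R] {a b p w : R} (h₁ : a * b + b * a = p + p)
    (h₂ : a * p + p * a = w + w) (h₃ : a * a * b + b * (a * a) = w + w) : ⁅a, ⁅a, b⁆⁆ = 0 := by
  have : ⁅a, ⁅a, b⁆⁆ = (a * a * b + b * (a * a)) + (a * a * b + b * (a * a))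
      - (a * (a * b + b * a) + (a * b + b * a) * a) := by
    simp only [Ring.lie_def]; noncomm_ring
  rw [this, h₁, h₃, ← h₂]
  noncomm_ring

lemma Ring.lie_mul_right [Ring R] (a x y : R) : ⁅a, x * y⁆ = ⁅a, x⁆ * y + x * ⁅a, y⁆ := by
  simp only [Ring.lie_def]; noncomm_ring

lemma iterate_lie_mul [Ring R] {a b : R} (h : ⁅a, ⁅a, b⁆⁆ = 0) (n : ℕ) (y : R) :
    (⁅a, ·⁆)^[n + 1] (b * y) = b * (⁅a, ·⁆)^[n + 1] y + (n + 1) • (⁅a, b⁆ * (⁅a, ·⁆)^[n] y) := by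
  induction n generalizing y with
  | zero => simp [Ring.lie_mul_right, add_comm]
  | succ n ih =>
    rw [Function.iterate_succ_apply', ih, Function.iterate_succ_apply' _ (n + 1),
      Function.iterate_succ_apply' _ n]
    set z := (⁅a, ·⁆)^[n] y
    calc ⁅a, b * ⁅a, z⁆ + (n + 1) • (⁅a, b⁆ * z)⁆
        = ⁅a, b * ⁅a, z⁆⁆ + (n + 1) • ⁅a, ⁅a, b⁆ * z⁆ := by
          simp only [Ring.lie_def, mul_add, add_mul, mul_smul_comm, smul_mul_assoc, smul_sub]
          abel
      _ = ⁅a, b⁆ * ⁅a, z⁆ + b * ⁅a, ⁅a, z⁆⁆ + (n + 1) • (⁅a, b⁆ * ⁅a, z⁆) := by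
          rw [Ring.lie_mul_right, Ring.lie_mul_right, h, zero_mul, zero_add]
      _ = b * ⁅a, ⁅a, z⁆⁆ + (n + 1 + 1) • (⁅a, b⁆ * ⁅a, z⁆) := by
          simp only [add_smul, one_smul]; abel

lemma iterate_lie_pow_of_lt [Ring R] {a b : R} (h : ⁅a, ⁅a, b⁆⁆ = 0) {m n : ℕ} (hmn : m < n) :
    (⁅a, ·⁆)^[n] (b ^ m) = 0 := by
  induction m generalizing n with
  | zero =>
    obtain ⟨n, rfl⟩ := Nat.exists_eq_add_of_lt hmn
    rw [pow_zero, zero_add, Function.iterate_succ_apply, Ring.lie_def, mul_one, one_mul, sub_self]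
    exact Function.iterate_fixed (by rw [Ring.lie_def, mul_zero, zero_mul, sub_self]) n
  | succ m ih =>
    obtain ⟨n, rfl⟩ : ∃ k, n = k + 1 := ⟨n - 1, by omega⟩
    rw [pow_succ', iterate_lie_mul h, ih (by omega), ih (by omega), mul_zero, mul_zero,
      smul_zero, add_zero]

lemma iterate_lie_pow_self [Ring R] {a b : R} (h : ⁅a, ⁅a, b⁆⁆ = 0) (m : ℕ) :
    (⁅a, ·⁆)^[m] (b ^ m) = m ! • ⁅a, b⁆ ^ m := by
  induction m with
  | zero => simp
  | succ m ih =>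
    rw [pow_succ', iterate_lie_mul h, iterate_lie_pow_of_lt h (Nat.lt_succ_self m), ih,
      mul_zero, zero_add, mul_smul_comm, smul_smul, ← pow_succ', Nat.factorial_succ, mul_comm]

lemma norm_iterate_lie_le [NormedRing R] (a x : R) (n : ℕ) :
    ‖(⁅a, ·⁆)^[n] x‖ ≤ (2 * ‖a‖) ^ n * ‖x‖ := by
  induction n generalizing x with
  | zero => simp
  | succ n ih =>
    rw [Function.iterate_succ_apply, pow_succ, mul_assoc]
    refine (ih _).trans (mul_le_mul_of_nonneg_left ?_ (by positivity))
    calc ‖⁅a, x⁆‖ ≤ ‖a * x‖ + ‖x * a‖ := by rw [Ring.lie_def]; exact norm_sub_le _ _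
      _ ≤ ‖a‖ * ‖x‖ + ‖x‖ * ‖a‖ := add_le_add (norm_mul_le _ _) (norm_mul_le _ _)
      _ = 2 * ‖a‖ * ‖x‖ := by ring

lemma factorial_mul_norm_lie_pow_le [NormedRing R] [NormedSpace ℝ R] {a b : R}
    (h : ⁅a, ⁅a, b⁆⁆ = 0) {m : ℕ} (hm : m ≠ 0) : m ! * ‖⁅a, b⁆ ^ m‖ ≤ (2 * ‖a‖ * ‖b‖) ^ m := by
  calc (m ! : ℝ) * ‖⁅a, b⁆ ^ m‖ = ‖(⁅a, ·⁆)^[m] (b ^ m)‖ := by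
        rw [iterate_lie_pow_self h, RCLike.norm_nsmul ℝ, nsmul_eq_mul]
    _ ≤ (2 * ‖a‖) ^ m * ‖b ^ m‖ := norm_iterate_lie_le a _ m
    _ ≤ (2 * ‖a‖) ^ m * ‖b‖ ^ m := by gcongr; exact norm_pow_le' b (Nat.pos_of_ne_zero hm)
    _ = (2 * ‖a‖ * ‖b‖) ^ m := (mul_pow _ _ _).symm

lemma norm_pow_two_pow_of_star_eq_neg [NormedRing R] [StarRing R] [CStarRing R] {d : R}
    (hd : star d = -d) (k : ℕ) : ‖d ^ 2 ^ k‖ = ‖d‖ ^ 2 ^ k := by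
  cases k with
  | zero => simp
  | succ k =>
    have hdd : IsSelfAdjoint (d * d) := by rw [IsSelfAdjoint, star_mul, hd, neg_mul_neg]
    have hnorm : ‖d * d‖ = ‖d‖ * ‖d‖ := by
      rw [← CStarRing.norm_star_mul_self, hd, neg_mul, norm_neg]
    rw [pow_succ', pow_mul, sq, hdd.norm_pow_two_pow, hnorm, ← sq, ← pow_mul]

lemma eq_zero_of_factorial_mul_pow_two_pow_le {x c : ℝ} (hx : 0 ≤ x)
    (h : ∀ k : ℕ, ((2 ^ k) ! : ℝ) * x ^ 2 ^ k ≤ c ^ 2 ^ k) : x = 0 := by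
  by_contra hne
  have hpos : 0 < x := lt_of_le_of_ne hx (Ne.symm hne)
  obtain ⟨N, hN⟩ := Filter.eventually_atTop.1 <|
    (FloorSemiring.tendsto_pow_div_factorial_atTop (c / x)).eventually_lt_const one_pos
  have hlt := hN (2 ^ N) Nat.lt_two_pow_self.le
  rw [div_pow, div_div, div_lt_one (by positivity), mul_comm] at hlt
  exact (h N).not_gt hlt

/-- Kleinecke–Shirokov for self-adjoint elements: `[a, [a, b]] = 0` gives
`m! ‖[a, b]^m‖ ≤ (2‖a‖‖b‖)^m`, so the skew-adjoint element `[a, b]` is quasinilpotent,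
hence zero. -/
theorem lie_eq_zero_of_lie_lie_eq_zero [NormedRing R] [StarRing R] [CStarRing R]
    [NormedSpace ℝ R] {a b : R} (ha : IsSelfAdjoint a) (hb : IsSelfAdjoint b)
    (h : ⁅a, ⁅a, b⁆⁆ = 0) : ⁅a, b⁆ = 0 := by
  have hstar : star ⁅a, b⁆ = -⁅a, b⁆ := by
    rw [Ring.lie_def, star_sub, star_mul, star_mul, ha.star_eq, hb.star_eq, neg_sub]
  refine norm_eq_zero.1 <| eq_zero_of_factorial_mul_pow_two_pow_le (c := 2 * ‖a‖ * ‖b‖)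
    (norm_nonneg _) fun k => ?_
  rw [← norm_pow_two_pow_of_star_eq_neg hstar k]
  exact factorial_mul_norm_lie_pow_le h (by positivity)

end Commutator

namespace HiddenVar

open CompactlySupported CompactlySupportedContinuousMap

section ExpVal

variable {H : Type*} [NormedAddCommGroup H] [InnerProductSpace ℂ H]

lemma expVal_add (A B : H →L[ℂ] H) (ψ : H) : expVal (A + B) ψ = expVal A ψ + expVal B ψ := by
  simp [expVal]

lemma expVal_sub (A B : H →L[ℂ] H) (ψ : H) : expVal (A - B) ψ = expVal A ψ - expVal B ψ := by
  simp [expVal]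

lemma expVal_smul (r : ℝ) (A : H →L[ℂ] H) (ψ : H) : expVal (r • A) ψ = r * expVal A ψ := by
  simp [expVal]

lemma expVal_mono {A B : H →L[ℂ] H} (h : A ≤ B) (ψ : H) : expVal A ψ ≤ expVal B ψ := by
  simpa [expVal, inner_sub_right] using
    ((ContinuousLinearMap.le_def A B).1 h).re_inner_nonneg_right ψ

lemma expVal_one {ψ : H} (hψ : ‖ψ‖ = 1) : expVal 1 ψ = 1 := by
  simp [expVal, hψ]

lemma expVal_smul_right (A : H →L[ℂ] H) (c : ℂ) (ψ : H) :
    expVal A (c • ψ) = ‖c‖ ^ 2 * expVal A ψ := by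
  rw [expVal, map_smul, inner_smul_left, inner_smul_right, ← mul_assoc, Complex.conj_mul',
    ← Complex.ofReal_pow, Complex.re_ofReal_mul, expVal]

variable [CompleteSpace H]

lemma eq_of_expVal_eq {A B : H →L[ℂ] H} (hA : IsSelfAdjoint A) (hB : IsSelfAdjoint B)
    (h : ∀ ψ : H, ‖ψ‖ = 1 → expVal A ψ = expVal B ψ) : A = B := by
  have hzero (x : H) : expVal (A - B) x = 0 := by
    rcases eq_or_ne x 0 with rfl | hx
    · simp [expVal]
    have hxψ : x = (‖x‖ : ℂ) • ((‖x‖⁻¹ : ℂ) • x) := by simp [smul_smul, hx]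
    have hψ : ‖(‖x‖⁻¹ : ℂ) • x‖ = 1 := by simp [norm_smul, hx]
    rw [hxψ, expVal_smul_right, expVal_sub, h _ hψ, sub_self, mul_zero]
  have hsymm := (hA.sub hB).isSymmetric
  rw [← sub_eq_zero, ← ContinuousLinearMap.coe_inj, ContinuousLinearMap.toLinearMap_zero,
    ← hsymm.inner_map_self_eq_zero]
  intro x
  rw [← hsymm.coe_re_inner_apply_self, inner_re_symm]
  exact congrArg Complex.ofReal (hzero x)

end ExpVal

section SpectralMeasure

variable {H : Type*} [NormedAddCommGroup H] [InnerProductSpace ℂ H] [CompleteSpace H]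
  {T : H →L[ℂ] H}

def cfcVectorState (hT : IsSelfAdjoint T) (ψ : H) : C_c(spectrum ℝ T, ℝ) →ₚ[ℝ] ℝ where
  toFun f := expVal (cfcHom (R := ℝ) hT f.toContinuousMap) ψ
  map_add' f g := by
    change expVal (cfcHom (R := ℝ) hT (f.toContinuousMap + g.toContinuousMap)) ψ = _
    rw [map_add, expVal_add]
  map_smul' r f := by
    change expVal (cfcHom (R := ℝ) hT (r • f.toContinuousMap)) ψ = _
    rw [map_smul, expVal_smul]
    rfl
  monotone' f g hfg := expVal_mono (OrderHomClass.mono (cfcHom (R := ℝ) hT) hfg) ψ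

/-- The spectral measure of `T` at `ψ`: the Riesz–Markov–Kakutani measure of the vector state
`f ↦ ⟨f(T)⟩_ψ` on `C(spectrum ℝ T, ℝ)`, pushed forward to `ℝ`. -/
def spectralMeasure (hT : IsSelfAdjoint T) (ψ : H) : Measure ℝ :=
  (RealRMK.rieszMeasure (cfcVectorState hT ψ)).map Subtype.val

lemma integral_spectralMeasure (hT : IsSelfAdjoint T) (ψ : H) {b : ℝ → ℝ} (hb : Continuous b) :
    ∫ r, b r ∂spectralMeasure hT ψ = expVal (cfc b T) ψ := by
  rw [spectralMeasure, integral_map continuous_subtype_val.aemeasurable hb.aestronglyMeasurable,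
    cfc_apply b T hT hb.continuousOn]
  exact RealRMK.integral_rieszMeasure (cfcVectorState hT ψ)
    (continuousMapEquiv ⟨_, hb.continuousOn.domRestrict⟩)

lemma isSpecMeasure_spectralMeasure (hT : IsSelfAdjoint T) {ψ : H} (hψ : ‖ψ‖ = 1) :
    IsSpecMeasure T ψ (spectralMeasure hT ψ) := by
  have : Nontrivial H := nontrivial_of_ne ψ 0 (by simp [← norm_ne_zero_iff, hψ])
  refine ⟨⟨?_⟩, ?_, fun n => ?_⟩
  · have h := integral_spectralMeasure hT ψ (b := fun _ => 1) continuous_const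
    rw [cfc_const_one ℝ T, expVal_one hψ, integral_const, smul_eq_mul, mul_one,
      measureReal_def, ENNReal.toReal_eq_one_iff] at h
    exact h
  · rw [spectralMeasure, Measure.map_apply continuous_subtype_val.measurable
      (measurableSet_Icc (a := -‖T‖) (b := ‖T‖)).compl]
    convert measure_empty (μ := RealRMK.rieszMeasure (cfcVectorState hT ψ))
    refine Set.eq_empty_of_forall_notMem fun x hx => hx ?_
    simpa [Real.closedBall_eq_Icc] using spectrum.subset_closedBall_norm T x.2
  · rw [integral_spectralMeasure hT ψ (continuous_pow n), cfc_pow_id T n]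

lemma IsBFC.eq_cfc {b : ℝ → ℝ} {S : H →L[ℂ] H} (h : IsBFC b T S) (hT : IsSelfAdjoint T)
    (hb : Continuous b) : S = cfc b T :=
  eq_of_expVal_eq h.1 (cfc_predicate b T) fun ψ hψ => by
    rw [← h.2 ψ hψ _ (isSpecMeasure_spectralMeasure hT hψ), integral_spectralMeasure hT ψ hb]

end SpectralMeasure

section LineIntegrals

variable {H : Type*} [NormedAddCommGroup H] [InnerProductSpace ℂ H] {η : Measure ℂ}
  {u v : H → ℝ}

lemma pseudoBorelFun_iff {f : H → ℝ} :
    PseudoBorelFun f ↔ ∀ ψ : H, ‖ψ‖ = 1 → Measurable fun z : ℂ => f (z • ψ) :=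
  ⟨fun hf ψ hψ _ hB => hf _ hB ψ hψ, fun hf _ hB ψ hψ => hf ψ hψ hB⟩

lemma PseudoBorelFun.add (hu : PseudoBorelFun u) (hv : PseudoBorelFun v) :
    PseudoBorelFun (u + v) :=
  pseudoBorelFun_iff.2 fun ψ hψ =>
    (pseudoBorelFun_iff.1 hu ψ hψ).add (pseudoBorelFun_iff.1 hv ψ hψ)

lemma NullPB.union {N M : Set H} (hN : NullPB η N) (hM : NullPB η M) : NullPB η (N ∪ M) :=
  ⟨fun ψ hψ => (hN.1 ψ hψ).union (hM.1 ψ hψ),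
    fun ψ hψ => measure_union_null (hN.2 ψ hψ) (hM.2 ψ hψ)⟩

lemma EssBddPB.add (hu : EssBddPB η u) (hv : EssBddPB η v) : EssBddPB η (u + v) := by
  obtain ⟨N, hN, c, hc⟩ := hu
  obtain ⟨M, hM, d, hd⟩ := hv
  refine ⟨N ∪ M, hN.union hM, c + d, fun x hx => ?_⟩
  rw [Set.mem_union, not_or] at hx
  exact (abs_add_le _ _).trans (add_le_add (hc x hx.1) (hd x hx.2))

lemma integrable_line [IsFiniteMeasure η] {f : H → ℝ} (hf : PseudoBorelFun f)
    (hb : EssBddPB η f) {ψ : H} (hψ : ‖ψ‖ = 1) : Integrable (fun z : ℂ => f (z • ψ)) η := by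
  obtain ⟨N, hN, c, hc⟩ := hb
  refine Integrable.of_bound (pseudoBorelFun_iff.1 hf ψ hψ).aestronglyMeasurable c ?_
  exact measure_mono_null (fun z hz => by_contra fun hzN => hz (hc _ hzN)) (hN.2 ψ hψ)

end LineIntegrals

lemma memB_of_continuous {b : ℝ → ℝ} (hb : Continuous b) : MemB b :=
  ⟨hb.measurable, fun _ hs => (hs.isCompact_closure.image hb).isBounded.subset
    (Set.image_mono subset_closure)⟩

section HiddenObservables

variable {H : Type*} [NormedAddCommGroup H] [InnerProductSpace ℂ H] [CompleteSpace H]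
  {η : Measure ℂ} {u v : H → ℝ} {A B : H →L[ℂ] H}

lemma OrthodoxMean.add [IsFiniteMeasure η] (hu : OrthodoxMean η u A)
    (hv : OrthodoxMean η v B) : OrthodoxMean η (u + v) (A + B) := by
  refine ⟨hu.1.add hv.1, hu.2.1.add hv.2.1, hu.2.2.1.add hv.2.2.1, fun ψ hψ => ?_⟩
  rw [expVal_add, ← hu.2.2.2 ψ hψ, ← hv.2.2.2 ψ hψ]
  exact integral_add (integrable_line hu.1 hu.2.1 hψ) (integrable_line hv.1 hv.2.1 hψ)

lemma OrthodoxMean.unique {f : H → ℝ} (hA : OrthodoxMean η f A) (hB : OrthodoxMean η f B) : A = B :=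
  eq_of_expVal_eq hA.2.2.1 hB.2.2.1 fun ψ hψ => by rw [← hA.2.2.2 ψ hψ, ← hB.2.2.2 ψ hψ]

lemma HiddenObs.orthodoxMean_mul_self (hu : HiddenObs η u A) :
    OrthodoxMean η (u * u) (A * A) := by
  obtain ⟨S, hS, hSu⟩ := hu.2 (· ^ 2) (memB_of_continuous (continuous_pow 2))
  rw [hS.eq_cfc hu.1.2.2.1 (continuous_pow 2), cfc_pow_id A 2 hu.1.2.2.1, sq] at hSu
  convert hSu using 1
  funext x
  exact (sq (u x)).symm

lemma HiddenObs.mul_self (hu : HiddenObs η u A) (huu : IsHiddenObs η (u * u)) :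
    HiddenObs η (u * u) (A * A) := by
  obtain ⟨X, hX⟩ := huu
  rwa [← hX.1.unique hu.orthodoxMean_mul_self]

lemma HiddenObs.mul_add_mul_eq [IsFiniteMeasure η] {W : H →L[ℂ] H} (hu : HiddenObs η u A)
    (hv : HiddenObs η v B) (huv : IsHiddenObs η (u + v)) (hW : OrthodoxMean η (u * v) W) :
    A * B + B * A = W + W := by
  obtain ⟨Q, hQ⟩ := huv
  obtain rfl : Q = A + B := hQ.1.unique (hu.1.add hv.1)
  have hsq : (u + v) * (u + v) = u * u + (u * v + u * v) + v * v := by ring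
  have key := hQ.orthodoxMean_mul_self.unique <| hsq ▸
    (hu.orthodoxMean_mul_self.add (hW.add hW)).add hv.orthodoxMean_mul_self
  rw [show (A + B) * (A + B) = A * A + (A * B + B * A) + B * B by noncomm_ring] at key
  exact add_left_cancel (add_right_cancel key)

end HiddenObservables

variable {H : Type*} [NormedAddCommGroup H] [InnerProductSpace ℂ H] [CompleteSpace H]

variable [TopologicalSpace.SeparableSpace H]

theorem stmt9_general (η : Measure ℂ) (hη : IsEta η)
    (C : Set (H → ℝ))
    (hadd : ∀ f ∈ C, ∀ g ∈ C, f + g ∈ C)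
    (hmul : ∀ f ∈ C, ∀ g ∈ C, f * g ∈ C) :
    (¬ ∀ f ∈ C, IsHiddenObs η f) ∨
      ∀ f ∈ C, ∀ g ∈ C, ∀ T S : H →L[ℂ] H,
        HiddenObs η f T → HiddenObs η g S → T * S = S * T := by
  refine (em' _).imp_right fun hall f hf g hg T S hT hS => ?_
  have : IsProbabilityMeasure η := hη.1
  have jordan {u v : H → ℝ} (hu : u ∈ C) (hv : v ∈ C) {A B W : H →L[ℂ] H}
      (hA : HiddenObs η u A) (hB : HiddenObs η v B) (hW : OrthodoxMean η (u * v) W) :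
      A * B + B * A = W + W :=
    hA.mul_add_mul_eq hB (hall _ (hadd u hu v hv)) hW
  obtain ⟨P, hP⟩ := hall _ (hmul f hf g hg)
  obtain ⟨W, hW⟩ := hall _ (hmul f hf _ (hmul f hf g hg))
  have hTT := hT.mul_self (hall _ (hmul f hf f hf))
  have hlie : ⁅T, ⁅T, S⁆⁆ = 0 := lie_lie_eq_zero_of_jordan (jordan hf hg hT hS hP.1)
    (jordan hf (hmul f hf g hg) hT hP hW.1)
    (jordan (hmul f hf f hf) hg hTT hS (by rw [mul_assoc]; exact hW.1))
  exact sub_eq_zero.1 (lie_eq_zero_of_lie_lie_eq_zero hT.1.2.2.1 hS.1.2.2.1 hlie)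

theorem stmt9 (hdim : ¬ FiniteDimensional ℂ H) (η : Measure ℂ) (hη : IsEta η)
    (C : Set (H → ℝ))
    (hadd : ∀ f ∈ C, ∀ g ∈ C, f + g ∈ C)
    (hmul : ∀ f ∈ C, ∀ g ∈ C, f * g ∈ C)
    (hsmul : ∀ (r : ℝ), ∀ f ∈ C, r • f ∈ C)
    (hcomp : ∀ f ∈ C, ∀ b : ℝ → ℝ, MemB b → b ∘ f ∈ C) :
    (¬ ∀ f ∈ C, IsHiddenObs η f) ∨
      ∀ f ∈ C, ∀ g ∈ C, ∀ T S : H →L[ℂ] H,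
        HiddenObs η f T → HiddenObs η g S → T * S = S * T :=
  stmt9_general η hη C hadd hmul

end HiddenVar
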